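/- Let K ≥ 2 be an integer and let α ∈ ℝ with α ≤ 1. Then the infimum of 2·D_α(p‖q)/‖p−q‖₁² over all pairs p ≠ q in relint(Δ^K) equals 2^{1−α}. In particular, D_α(p‖q) ≥ 2^{−α}·‖p−q‖₁² for all p, q ∈ relint(Δ^K), and the constant 2^{1−α} is the largest C ≥ 0 such that D_α(p‖q) ≥ (C/2)·‖p−q‖₁² holds for all p, q ∈ relint(Δ^K). -/

import Mathlib

open Finset Real

/-- The α-Tsallis entropy on the positive orthant (Shannon for α = 1, Burg for α = 0). -/
noncomputable def tsallis (α : ℝ) {K : ℕ} (p : Fin K → ℝ) : ℝ :=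
  if α = 0 then ∑ k, Real.log (p k)
  else if α = 1 then -∑ k, p k * Real.log (p k)
  else (∑ k, p k ^ α) / (α * (1 - α))

/-- The gradient of the α-Tsallis entropy on the positive orthant. -/
noncomputable def tsallisGrad (α : ℝ) {K : ℕ} (q : Fin K → ℝ) (k : Fin K) : ℝ :=
  if α = 0 then 1 / q k
  else if α = 1 then -(1 + Real.log (q k))
  else -(q k ^ (α - 1)) / (α - 1)

/-- The Bregman divergence D_α of the negative α-Tsallis entropy:
`D_α(p‖q) = -S_α(p) + S_α(q) + ⟨∇S_α(q), p - q⟩`. -/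
noncomputable def breg (α : ℝ) {K : ℕ} (p q : Fin K → ℝ) : ℝ :=
  -tsallis α p + tsallis α q + ∑ k, tsallisGrad α q k * (p k - q k)

/-- The relative interior of the probability simplex Δ^K. -/
def relintSimplex (K : ℕ) : Set (Fin K → ℝ) :=
  {p | (∀ k, 0 < p k ∧ p k < 1) ∧ ∑ k, p k = 1}

/-- The ℓ¹ norm on ℝ^K. -/
noncomputable def l1 {K : ℕ} (x : Fin K → ℝ) : ℝ := ∑ k, |x k|


/-!
Writing `-S_α(p) = ∑ₖ φ_α(p_k)` with `φ_α'' x = x ^ (α - 2)` for every `α`, Taylor's formula gives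
`D_α(p‖q) = ∑ₖ ∫₀¹ (1 - s) (p_k - q_k)² m_k(s) ^ (α - 2) ds` with `m_k(s) = q_k + s (p_k - q_k)`.
For `α ≤ 1` the integrand is jointly subadditive in `(p_k, q_k)` (superadditivity of
`m ↦ m ^ (2 - α)` plus Cauchy–Schwarz), so merging the coordinates where `p ≥ q` and those where
`p < q` can only decrease `D_α`. For the merged two-point distributions `(a, 1 - a)` and
`(b, 1 - b)`, the bound `u ^ (α - 2) + (1 - u) ^ (α - 2) ≥ 2 ^ (3 - α)` on `(0, 1)` gives
`D_α ≥ 2 ^ (2 - α) (a - b)² = 2 ^ (-α) ‖p - q‖₁²`.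

The constant is approached by `q = (c, c, u, …, u)` and `p = (c + u, c - u, u, …, u)`: there
`2 D_α(p‖q) / ‖p - q‖₁² ≤ (c ^ (α - 2) + (c - u) ^ (α - 2)) / 4 → 2 ^ (1 - α)` as `u → 0`.
-/

open Topology

noncomputable def negTsallis (α x : ℝ) : ℝ :=
  if α = 0 then -Real.log x
  else if α = 1 then x * Real.log x
  else x ^ α / (α * (α - 1))

noncomputable def negTsallisDeriv (α x : ℝ) : ℝ :=
  if α = 0 then -x⁻¹
  else if α = 1 then 1 + Real.log x
  else x ^ (α - 1) / (α - 1)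

lemma tsallis_eq_neg_sum_negTsallis (α : ℝ) {K : ℕ} (p : Fin K → ℝ) :
    tsallis α p = -∑ k, negTsallis α (p k) := by
  unfold tsallis negTsallis
  split_ifs
  · simp
  · simp
  · rw [Finset.sum_div, ← Finset.sum_neg_distrib]
    refine Finset.sum_congr rfl fun k _ => ?_
    rw [← neg_sub, mul_neg, div_neg]

lemma tsallisGrad_eq_neg_negTsallisDeriv (α : ℝ) {K : ℕ} (q : Fin K → ℝ) (k : Fin K) :
    tsallisGrad α q k = -negTsallisDeriv α (q k) := by
  unfold tsallisGrad negTsallisDeriv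
  split_ifs <;> ring

lemma hasDerivAt_negTsallis (α : ℝ) {x : ℝ} (hx : 0 < x) :
    HasDerivAt (negTsallis α) (negTsallisDeriv α x) x := by
  unfold negTsallis negTsallisDeriv
  split_ifs with h0 h1
  · exact (Real.hasDerivAt_log hx.ne').neg
  · refine ((hasDerivAt_id' x).mul (Real.hasDerivAt_log hx.ne')).congr_deriv ?_
    field_simp
    ring
  · refine ((Real.hasDerivAt_rpow_const (p := α) (Or.inl hx.ne')).div_const
      (α * (α - 1))).congr_deriv ?_
    field_simp [sub_ne_zero.mpr h1]

lemma hasDerivAt_negTsallisDeriv (α : ℝ) {x : ℝ} (hx : 0 < x) :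
    HasDerivAt (negTsallisDeriv α) (x ^ (α - 2)) x := by
  unfold negTsallisDeriv
  split_ifs with h0 h1
  · refine (hasDerivAt_inv hx.ne').neg.congr_deriv ?_
    rw [h0, zero_sub, Real.rpow_neg hx.le, neg_neg]
    norm_cast
  · refine ((Real.hasDerivAt_log hx.ne').const_add 1).congr_deriv ?_
    rw [h1, show (1:ℝ) - 2 = -1 by norm_num, Real.rpow_neg_one]
  · refine ((Real.hasDerivAt_rpow_const (p := α - 1) (Or.inl hx.ne')).div_const
      (α - 1)).congr_deriv ?_
    rw [sub_sub, one_add_one_eq_two]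
    field_simp [sub_ne_zero.mpr h1]

lemma pos_of_mem_uIcc {x y z : ℝ} (hx : 0 < x) (hy : 0 < y) (hz : z ∈ Set.uIcc y x) : 0 < z :=
  (lt_inf_iff.2 ⟨hy, hx⟩).trans_le hz.1

lemma add_mul_sub_mem_uIcc {x y s : ℝ} (hs : s ∈ Set.Icc (0:ℝ) 1) :
    y + s * (x - y) ∈ Set.uIcc y x :=
  (convex_uIcc y x).add_smul_sub_mem Set.left_mem_uIcc Set.right_mem_uIcc hs

theorem sub_sub_deriv_mul_eq_integral {f f' f'' : ℝ → ℝ} {x y : ℝ}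
    (hf : ∀ z ∈ Set.uIcc y x, HasDerivAt f (f' z) z)
    (hf' : ∀ z ∈ Set.uIcc y x, HasDerivAt f' (f'' z) z)
    (hf'' : ContinuousOn f'' (Set.uIcc y x)) :
    f x - f y - f' y * (x - y) =
      ∫ s in (0:ℝ)..1, (1 - s) * (x - y) ^ 2 * f'' (y + s * (x - y)) := by
  have hseg : ∀ s ∈ Set.uIcc (0:ℝ) 1, y + s * (x - y) ∈ Set.uIcc y x := fun s hs =>
    add_mul_sub_mem_uIcc (by rwa [Set.uIcc_of_le zero_le_one] at hs)
  have hline : ∀ s, HasDerivAt (fun s : ℝ => y + s * (x - y)) (x - y) s := fun s => by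
    simpa using ((hasDerivAt_id s).mul_const (x - y)).const_add y
  have hprim : ∀ s ∈ Set.uIcc (0:ℝ) 1,
      HasDerivAt (fun s => f (y + s * (x - y)) + (1 - s) * (x - y) * f' (y + s * (x - y)))
        ((1 - s) * (x - y) ^ 2 * f'' (y + s * (x - y))) s := fun s hs => by
    have h1 := (hf _ (hseg s hs)).comp s (hline s)
    have h2 := (hf' _ (hseg s hs)).comp s (hline s)
    have h3 := (((hasDerivAt_id' s).const_sub 1).mul_const (x - y)).mul h2
    refine (h1.add h3).congr_deriv ?_
    simp only [Function.comp_apply]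
    ring
  have hint : IntervalIntegrable (fun s => (1 - s) * (x - y) ^ 2 * f'' (y + s * (x - y)))
      MeasureTheory.volume 0 1 :=
    (ContinuousOn.mul (by fun_prop) (hf''.comp (by fun_prop) hseg)).intervalIntegrable
  rw [intervalIntegral.integral_eq_sub_of_hasDerivAt hprim hint]
  ring_nf

noncomputable def bregTerm (α x y : ℝ) : ℝ :=
  ∫ s in (0:ℝ)..1, (1 - s) * (x - y) ^ 2 * (y + s * (x - y)) ^ (α - 2)

lemma negTsallis_sub_sub_eq_bregTerm (α : ℝ) {x y : ℝ} (hx : 0 < x) (hy : 0 < y) :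
    negTsallis α x - negTsallis α y - negTsallisDeriv α y * (x - y) = bregTerm α x y :=
  sub_sub_deriv_mul_eq_integral
    (fun _z hz => hasDerivAt_negTsallis α (pos_of_mem_uIcc hx hy hz))
    (fun _z hz => hasDerivAt_negTsallisDeriv α (pos_of_mem_uIcc hx hy hz))
    (ContinuousOn.rpow_const continuousOn_id fun _z hz => Or.inl (pos_of_mem_uIcc hx hy hz).ne')

lemma breg_eq_sum_bregTerm (α : ℝ) {K : ℕ} {p q : Fin K → ℝ} (hp : ∀ k, 0 < p k)
    (hq : ∀ k, 0 < q k) : breg α p q = ∑ k, bregTerm α (p k) (q k) := by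
  simp only [breg, tsallis_eq_neg_sum_negTsallis, tsallisGrad_eq_neg_negTsallisDeriv,
    ← negTsallis_sub_sub_eq_bregTerm α (hp _) (hq _), Finset.sum_sub_distrib, neg_mul,
    Finset.sum_neg_distrib]
  ring

lemma bregTerm_self (α x : ℝ) : bregTerm α x x = 0 := by
  simp [bregTerm]

lemma intervalIntegrable_bregTerm (α : ℝ) {x y : ℝ} (hx : 0 < x) (hy : 0 < y) :
    IntervalIntegrable (fun s => (1 - s) * (x - y) ^ 2 * (y + s * (x - y)) ^ (α - 2))
      MeasureTheory.volume 0 1 := by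
  refine ContinuousOn.intervalIntegrable (ContinuousOn.mul (by fun_prop) ?_)
  refine ContinuousOn.rpow_const (by fun_prop) fun s hs => Or.inl ?_
  rw [Set.uIcc_of_le zero_le_one] at hs
  exact (pos_of_mem_uIcc hx hy (add_mul_sub_mem_uIcc hs)).ne'

lemma integral_one_sub_mul (C : ℝ) : ∫ s in (0:ℝ)..1, (1 - s) * C = C / 2 := by
  rw [intervalIntegral.integral_mul_const,
    intervalIntegral.integral_sub intervalIntegrable_const intervalIntegral.intervalIntegrable_id]
  norm_num
  ring

lemma add_sq_mul_rpow_add_le {r : ℝ} (hr : r ≤ -1) {m m' : ℝ} (hm : 0 < m) (hm' : 0 < m')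
    (a b : ℝ) : (a + b) ^ 2 * (m + m') ^ r ≤ a ^ 2 * m ^ r + b ^ 2 * m' ^ r := by
  have hpow : ∀ z : ℝ, 0 < z → z ^ r = (z ^ (-r))⁻¹ := fun z hz => by
    rw [← Real.rpow_neg hz.le, neg_neg]
  have hP := Real.rpow_pos_of_pos hm (-r)
  have hP' := Real.rpow_pos_of_pos hm' (-r)
  have hsuper : m ^ (-r) + m' ^ (-r) ≤ (m + m') ^ (-r) :=
    Real.add_rpow_le_rpow_add hm.le hm'.le (by linarith)
  have htitu := Finset.sq_sum_div_le_sum_sq_div Finset.univ ![a, b]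
    (g := ![m ^ (-r), m' ^ (-r)]) (by simp [Fin.forall_fin_two, hP, hP'])
  simp only [Fin.sum_univ_two, Matrix.cons_val_zero, Matrix.cons_val_one] at htitu
  rw [hpow m hm, hpow m' hm', hpow _ (add_pos hm hm')]
  calc (a + b) ^ 2 * ((m + m') ^ (-r))⁻¹ ≤ (a + b) ^ 2 / (m ^ (-r) + m' ^ (-r)) :=
        div_le_div_of_nonneg_left (sq_nonneg _) (add_pos hP hP') hsuper
    _ ≤ _ := htitu

lemma two_rpow_one_sub_le_rpow_add_rpow_one_sub {r u : ℝ} (hr : r ≤ 0) (hu : 0 < u)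
    (hu1 : u < 1) : (2:ℝ) ^ (1 - r) ≤ u ^ r + (1 - u) ^ r := by
  have h1u : 0 < 1 - u := by linarith
  have hsq : ∀ z : ℝ, 0 < z → z ^ r = (z ^ (r / 2)) ^ 2 := fun z hz => by
    rw [← Real.rpow_natCast, ← Real.rpow_mul hz.le]
    norm_num
  have hgm : (2:ℝ) ^ (-r) ≤ u ^ (r / 2) * (1 - u) ^ (r / 2) := by
    rw [← Real.mul_rpow hu.le h1u.le]
    calc (2:ℝ) ^ (-r) = (1 / 4 : ℝ) ^ (r / 2) := by
          rw [show (1 / 4 : ℝ) = 2 ^ (-2 : ℝ) by norm_num, ← Real.rpow_mul zero_le_two]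
          ring_nf
      _ ≤ (u * (1 - u)) ^ (r / 2) :=
          Real.rpow_le_rpow_of_nonpos (mul_pos hu h1u) (by nlinarith [sq_nonneg (u - 1 / 2)])
            (by linarith)
  rw [hsq u hu, hsq _ h1u, sub_eq_add_neg, Real.rpow_add two_pos, Real.rpow_one]
  nlinarith [sq_nonneg (u ^ (r / 2) - (1 - u) ^ (r / 2))]

section bregTerm

variable {α : ℝ}

lemma bregTerm_add_le (hα : α ≤ 1) {x y u v : ℝ} (hx : 0 < x) (hy : 0 < y) (hu : 0 < u)
    (hv : 0 < v) : bregTerm α (x + u) (y + v) ≤ bregTerm α x y + bregTerm α u v := by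
  rw [bregTerm, bregTerm, bregTerm, ← intervalIntegral.integral_add
    (intervalIntegrable_bregTerm α hx hy) (intervalIntegrable_bregTerm α hu hv)]
  refine intervalIntegral.integral_mono_on zero_le_one
    (intervalIntegrable_bregTerm α (add_pos hx hu) (add_pos hy hv))
    ((intervalIntegrable_bregTerm α hx hy).add (intervalIntegrable_bregTerm α hu hv))
    fun s hs => ?_
  have hm := pos_of_mem_uIcc hx hy (add_mul_sub_mem_uIcc (x := x) (y := y) hs)
  have hm' := pos_of_mem_uIcc hu hv (add_mul_sub_mem_uIcc (x := u) (y := v) hs)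
  have key := mul_le_mul_of_nonneg_left
    (add_sq_mul_rpow_add_le (r := α - 2) (by linarith) hm hm' (x - y) (u - v)) (sub_nonneg.2 hs.2)
  rw [show y + v + s * (x + u - (y + v)) = y + s * (x - y) + (v + s * (u - v)) by ring,
    show x + u - (y + v) = x - y + (u - v) by ring]
  linarith

lemma bregTerm_sum_le (hα : α ≤ 1) {ι : Type*} {s : Finset ι} (hs : s.Nonempty)
    {p q : ι → ℝ} (hp : ∀ i ∈ s, 0 < p i) (hq : ∀ i ∈ s, 0 < q i) :
    bregTerm α (∑ i ∈ s, p i) (∑ i ∈ s, q i) ≤ ∑ i ∈ s, bregTerm α (p i) (q i) := by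
  induction hs using Finset.Nonempty.cons_induction with
  | singleton a => simp
  | cons a s ha hs ih =>
    simp only [Finset.forall_mem_cons] at hp hq
    simp only [Finset.sum_cons]
    calc _ ≤ bregTerm α (p a) (q a) + bregTerm α (∑ i ∈ s, p i) (∑ i ∈ s, q i) :=
          bregTerm_add_le hα hp.1 hq.1 (Finset.sum_pos hp.2 hs) (Finset.sum_pos hq.2 hs)
      _ ≤ _ := add_le_add le_rfl (ih hp.2 hq.2)

lemma two_rpow_mul_sq_le_bregTerm_add_bregTerm (hα : α ≤ 2) {a b : ℝ} (ha : 0 < a)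
    (ha1 : a < 1) (hb : 0 < b) (hb1 : b < 1) :
    (2:ℝ) ^ (2 - α) * (a - b) ^ 2 ≤ bregTerm α a b + bregTerm α (1 - a) (1 - b) := by
  have h1a : 0 < 1 - a := by linarith
  have h1b : 0 < 1 - b := by linarith
  rw [show (2:ℝ) ^ (2 - α) * (a - b) ^ 2 = ((a - b) ^ 2 * 2 ^ (1 - (α - 2))) / 2 by
      rw [show 1 - (α - 2) = 1 + (2 - α) by ring, Real.rpow_add two_pos, Real.rpow_one]; ring,
    ← integral_one_sub_mul, bregTerm, bregTerm, ← intervalIntegral.integral_add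
      (intervalIntegrable_bregTerm α ha hb) (intervalIntegrable_bregTerm α h1a h1b)]
  refine intervalIntegral.integral_mono_on zero_le_one
    (Continuous.intervalIntegrable (by fun_prop) _ _)
    ((intervalIntegrable_bregTerm α ha hb).add (intervalIntegrable_bregTerm α h1a h1b))
    fun s hs => ?_
  have hm := pos_of_mem_uIcc ha hb (add_mul_sub_mem_uIcc (x := a) (y := b) hs)
  have hm' := pos_of_mem_uIcc h1a h1b (add_mul_sub_mem_uIcc (x := 1 - a) (y := 1 - b) hs)
  rw [show 1 - b + s * (1 - a - (1 - b)) = 1 - (b + s * (a - b)) by ring] at hm' ⊢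
  have key := mul_le_mul_of_nonneg_left
    (two_rpow_one_sub_le_rpow_add_rpow_one_sub (r := α - 2) (by linarith) hm (by linarith))
    (mul_nonneg (sub_nonneg.2 hs.2) (sq_nonneg (a - b)))
  rw [show 1 - a - (1 - b) = -(a - b) by ring, neg_sq]
  linarith

lemma bregTerm_le (hα : α ≤ 2) {x y : ℝ} (hx : 0 < x) (hy : 0 < y) :
    bregTerm α x y ≤ (x - y) ^ 2 / 2 * min x y ^ (α - 2) := by
  rw [div_mul_eq_mul_div, ← integral_one_sub_mul]
  refine intervalIntegral.integral_mono_on zero_le_one (intervalIntegrable_bregTerm α hx hy)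
    (Continuous.intervalIntegrable (by fun_prop) _ _) fun s hs => ?_
  have hseg := add_mul_sub_mem_uIcc (x := x) (y := y) hs
  have hmin : min x y ≤ y + s * (x - y) := by
    rw [min_comm]
    exact hseg.1
  rw [mul_assoc]
  exact mul_le_mul_of_nonneg_left (mul_le_mul_of_nonneg_left
    (Real.rpow_le_rpow_of_nonpos (lt_min hx hy) hmin (by linarith)) (sq_nonneg _))
    (sub_nonneg.2 hs.2)

end bregTerm

lemma l1_sub_pos {K : ℕ} {p q : Fin K → ℝ} (hpq : p ≠ q) : 0 < l1 (p - q) := by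
  obtain ⟨k, hk⟩ := Function.ne_iff.mp hpq
  exact Finset.sum_pos' (fun k _ => abs_nonneg _)
    ⟨k, Finset.mem_univ k, abs_pos.2 (sub_ne_zero.2 hk)⟩

lemma l1_sub_eq_two_mul_sum_filter {K : ℕ} {p q : Fin K → ℝ} (h : ∑ k, p k = ∑ k, q k) :
    l1 (p - q) = 2 * ∑ k ∈ Finset.univ.filter (fun k => q k ≤ p k), (p k - q k) := by
  have hzero : ∑ k ∈ Finset.univ.filter (fun k => q k ≤ p k), (p k - q k) +
      ∑ k ∈ Finset.univ.filter (fun k => ¬q k ≤ p k), (p k - q k) = 0 := by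
    rw [Finset.sum_filter_add_sum_filter_not, Finset.sum_sub_distrib, h, sub_self]
  simp only [l1, Pi.sub_apply]
  rw [← Finset.sum_filter_add_sum_filter_not Finset.univ (fun k => q k ≤ p k),
    Finset.sum_congr rfl fun k hk => abs_of_nonneg (sub_nonneg.2 (Finset.mem_filter.1 hk).2),
    Finset.sum_congr rfl fun k hk => abs_of_neg (sub_neg.2 (not_le.1 (Finset.mem_filter.1 hk).2)),
    Finset.sum_neg_distrib]
  linarith

lemma exists_lt_of_sum_eq_of_ne {ι : Type*} [Fintype ι] {p q : ι → ℝ}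
    (h : ∑ i, p i = ∑ i, q i) (hpq : p ≠ q) : ∃ i, p i < q i := by
  by_contra! hle
  exact hpq (funext fun i =>
    ((Finset.sum_eq_sum_iff_of_le fun i _ => hle i).1 h.symm i (Finset.mem_univ i)).symm)

lemma bregTerm_add_bregTerm_compl_le {α : ℝ} (hα : α ≤ 1) {ι : Type*} [Fintype ι]
    [DecidableEq ι] {p q : ι → ℝ} (hp : ∀ i, 0 < p i) (hq : ∀ i, 0 < q i) {A : Finset ι}
    (hA : A.Nonempty) (hAc : Aᶜ.Nonempty) :
    bregTerm α (∑ i ∈ A, p i) (∑ i ∈ A, q i) + bregTerm α (∑ i ∈ Aᶜ, p i) (∑ i ∈ Aᶜ, q i) ≤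
      ∑ i, bregTerm α (p i) (q i) := by
  rw [← Finset.sum_add_sum_compl A]
  exact add_le_add (bregTerm_sum_le hα hA (fun i _ => hp i) fun i _ => hq i)
    (bregTerm_sum_le hα hAc (fun i _ => hp i) fun i _ => hq i)

theorem two_rpow_neg_mul_l1_sq_le_breg {α : ℝ} (hα : α ≤ 1) {K : ℕ} {p q : Fin K → ℝ}
    (hp : p ∈ relintSimplex K) (hq : q ∈ relintSimplex K) :
    (2:ℝ) ^ (-α) * l1 (p - q) ^ 2 ≤ breg α p q := by
  obtain ⟨hp01, hp1⟩ := hp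
  obtain ⟨hq01, hq1⟩ := hq
  have hp0 (k : Fin K) : 0 < p k := (hp01 k).1
  have hq0 (k : Fin K) : 0 < q k := (hq01 k).1
  rw [breg_eq_sum_bregTerm α hp0 hq0]
  rcases eq_or_ne p q with rfl | hpq
  · simp [l1, bregTerm_self]
  set A := Finset.univ.filter (fun k => q k ≤ p k)
  have hA : A.Nonempty :=
    let ⟨k, hk⟩ := exists_lt_of_sum_eq_of_ne (hq1.trans hp1.symm) hpq.symm
    ⟨k, by simpa [A] using hk.le⟩
  have hAc : Aᶜ.Nonempty :=
    let ⟨k, hk⟩ := exists_lt_of_sum_eq_of_ne (hp1.trans hq1.symm) hpq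
    ⟨k, by simpa [A] using hk⟩
  have hpAc : ∑ k ∈ Aᶜ, p k = 1 - ∑ k ∈ A, p k := by
    rw [← hp1, ← Finset.sum_add_sum_compl A]
    ring
  have hqAc : ∑ k ∈ Aᶜ, q k = 1 - ∑ k ∈ A, q k := by
    rw [← hq1, ← Finset.sum_add_sum_compl A]
    ring
  have hcoarse := bregTerm_add_bregTerm_compl_le hα hp0 hq0 hA hAc
  have hbinary := two_rpow_mul_sq_le_bregTerm_add_bregTerm (hα.trans one_le_two)
    (Finset.sum_pos (fun k _ => hp0 k) hA)
    (by linarith [Finset.sum_pos (fun k _ => hp0 k) hAc])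
    (Finset.sum_pos (fun k _ => hq0 k) hA)
    (by linarith [Finset.sum_pos (fun k _ => hq0 k) hAc])
  have htwo : (2:ℝ) ^ (2 - α) = 4 * 2 ^ (-α) := by
    rw [sub_eq_add_neg, Real.rpow_add two_pos]
    norm_num
  rw [hpAc, hqAc] at hcoarse
  rw [htwo] at hbinary
  rw [l1_sub_eq_two_mul_sum_filter (hp1.trans hq1.symm), Finset.sum_sub_distrib]
  linarith

lemma sum_eq_add_add_card_sub_two_mul {ι : Type*} [Fintype ι] {f : ι → ℝ} {i j : ι}
    (hij : i ≠ j) {u : ℝ} (hf : ∀ k, k ≠ i ∧ k ≠ j → f k = u) :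
    ∑ k, f k = f i + f j + (Fintype.card ι - 2) * u := by
  have h := Fintype.sum_eq_add i j hij (f := fun k => f k - u)
    fun k hk => sub_eq_zero.2 (hf k hk)
  rw [Finset.sum_sub_distrib, Finset.sum_const, Finset.card_univ, nsmul_eq_mul] at h
  linarith

lemma mem_relintSimplex_of_pos {K : ℕ} (hK : 2 ≤ K) {p : Fin K → ℝ} (hp : ∀ k, 0 < p k)
    (hsum : ∑ k, p k = 1) : p ∈ relintSimplex K := by
  have : Nontrivial (Fin K) := Fin.nontrivial_iff_two_le.2 hK
  refine ⟨fun k => ⟨hp k, ?_⟩, hsum⟩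
  obtain ⟨j, hj⟩ := exists_ne k
  exact hsum ▸ Finset.single_lt_sum hj (Finset.mem_univ k) (Finset.mem_univ j) (hp j)
    fun i _ _ => (hp i).le

lemma exists_breg_ratio_le {α : ℝ} (hα : α ≤ 2) {K : ℕ} (hK : 2 ≤ K) {c u : ℝ} (hu : 0 < u)
    (huc : u < c) (hsum : 2 * c + (K - 2) * u = 1) :
    ∃ p ∈ relintSimplex K, ∃ q ∈ relintSimplex K, p ≠ q ∧
      2 * breg α p q / l1 (p - q) ^ 2 ≤ (c ^ (α - 2) + (c - u) ^ (α - 2)) / 4 := by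
  let i : Fin K := ⟨0, by omega⟩
  let j : Fin K := ⟨1, by omega⟩
  have hij : i ≠ j := by simp [i, j, Fin.ext_iff]
  let p : Fin K → ℝ := fun k => if k = i then c + u else if k = j then c - u else u
  let q : Fin K → ℝ := fun k => if k = i ∨ k = j then c else u
  have hpi : p i = c + u := if_pos rfl
  have hpj : p j = c - u := by simp [p, hij.symm]
  have hqi : q i = c := by simp [q]
  have hqj : q j = c := by simp [q]
  have hoff (k : Fin K) (hk : k ≠ i ∧ k ≠ j) : p k = u ∧ q k = u := by simp [p, q, hk.1, hk.2]
  have hp : p ∈ relintSimplex K := mem_relintSimplex_of_pos hK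
    (fun k => by simp only [p]; split_ifs <;> linarith)
    (by rw [sum_eq_add_add_card_sub_two_mul hij fun k hk => (hoff k hk).1, hpi, hpj,
      Fintype.card_fin]; linarith)
  have hq : q ∈ relintSimplex K := mem_relintSimplex_of_pos hK
    (fun k => by simp only [q]; split_ifs <;> linarith)
    (by rw [sum_eq_add_add_card_sub_two_mul hij fun k hk => (hoff k hk).2, hqi, hqj,
      Fintype.card_fin]; linarith)
  have hl1 : l1 (p - q) = 2 * u := by
    rw [l1, Fintype.sum_eq_add i j hij fun k hk => by simp [(hoff k hk).1, (hoff k hk).2]]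
    simp only [Pi.sub_apply, hpi, hpj, hqi, hqj, add_sub_cancel_left, sub_sub_cancel_left,
      abs_neg, abs_of_pos hu]
    ring
  have hbreg : breg α p q ≤ u ^ 2 / 2 * (c ^ (α - 2) + (c - u) ^ (α - 2)) := by
    rw [breg_eq_sum_bregTerm α (fun k => (hp.1 k).1) (fun k => (hq.1 k).1),
      Fintype.sum_eq_add i j hij fun k hk => by rw [(hoff k hk).1, (hoff k hk).2, bregTerm_self],
      hpi, hpj, hqi, hqj]
    have hup := bregTerm_le hα (x := c + u) (y := c) (by linarith) (by linarith)
    have hdown := bregTerm_le hα (x := c - u) (y := c) (by linarith) (by linarith)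
    rw [min_eq_right (by linarith), add_sub_cancel_left] at hup
    rw [min_eq_left (by linarith), sub_sub_cancel_left, neg_sq] at hdown
    linarith
  refine ⟨p, hp, q, hq, fun h => by simpa [hpi, hqi, hu.ne'] using congrFun h i, ?_⟩
  rw [hl1, div_le_iff₀ (by positivity)]
  linarith

lemma exists_breg_ratio_lt {α : ℝ} (hα : α ≤ 2) {K : ℕ} (hK : 2 ≤ K) {η : ℝ} (hη : 0 < η) :
    ∃ p ∈ relintSimplex K, ∃ q ∈ relintSimplex K, p ≠ q ∧
      2 * breg α p q / l1 (p - q) ^ 2 < (2:ℝ) ^ (1 - α) + η := by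
  set c : ℝ → ℝ := fun u => (1 - (K - 2) * u) / 2
  set φ : ℝ → ℝ := fun u => (c u ^ (α - 2) + (c u - u) ^ (α - 2)) / 4
  have hc : Continuous c := by fun_prop
  have hφ : ContinuousAt φ 0 := by
    have hc0 : c 0 ≠ 0 := by norm_num [c]
    have hcu0 : c 0 - 0 ≠ 0 := by norm_num [c]
    exact (((hc.continuousAt.rpow_const (Or.inl hc0))).add
      ((hc.sub continuous_id).continuousAt.rpow_const (Or.inl hcu0))).div_const 4
  have hφ0 : φ 0 = (2:ℝ) ^ (1 - α) := by
    have hhalf : (1 / 2 : ℝ) ^ (α - 2) = 2 ^ (2 - α) := by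
      rw [one_div, Real.inv_rpow zero_le_two, ← Real.rpow_neg zero_le_two, neg_sub]
    simp only [φ, c, mul_zero, sub_zero]
    rw [hhalf, show (2:ℝ) - α = 1 + (1 - α) by ring, Real.rpow_add two_pos]
    norm_num
    ring
  have hnear : ∀ᶠ u in 𝓝[>] (0:ℝ), 0 < u ∧ 0 < c u - u ∧ φ u < (2:ℝ) ^ (1 - α) + η := by
    refine eventually_mem_nhdsWithin.and (nhdsWithin_le_nhds ?_)
    refine ((hc.sub continuous_id).continuousAt.eventually (eventually_gt_nhds ?_)).and
      (hφ.eventually (eventually_lt_nhds (by linarith)))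
    norm_num [c]
  obtain ⟨u, hu, huc, hφu⟩ := hnear.exists
  obtain ⟨p, hp, q, hq, hpq, hratio⟩ :=
    exists_breg_ratio_le (c := c u) hα hK hu (sub_pos.1 huc) (by ring)
  exact ⟨p, hp, q, hq, hpq, hratio.trans_lt hφu⟩

lemma le_two_mul_breg_div_sq {α C : ℝ} {K : ℕ} {p q : Fin K → ℝ}
    (h : breg α p q ≥ C / 2 * l1 (p - q) ^ 2) (hpq : p ≠ q) :
    C ≤ 2 * breg α p q / l1 (p - q) ^ 2 := by
  have := l1_sub_pos hpq
  rw [le_div_iff₀ (by positivity)]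
  linarith

theorem pinsker_tsallis_alpha_le_one (K : ℕ) (hK : 2 ≤ K) (α : ℝ) (hα : α ≤ 1) :
    sInf {r : ℝ | ∃ p ∈ relintSimplex K, ∃ q ∈ relintSimplex K,
        p ≠ q ∧ r = 2 * breg α p q / (l1 (p - q)) ^ 2} = (2 : ℝ) ^ (1 - α) ∧
    (∀ p ∈ relintSimplex K, ∀ q ∈ relintSimplex K,
        breg α p q ≥ (2 : ℝ) ^ (-α) * (l1 (p - q)) ^ 2) ∧
    IsGreatest {C : ℝ | 0 ≤ C ∧ ∀ p ∈ relintSimplex K, ∀ q ∈ relintSimplex K,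
        breg α p q ≥ C / 2 * (l1 (p - q)) ^ 2} ((2 : ℝ) ^ (1 - α)) := by
  set S := {r : ℝ | ∃ p ∈ relintSimplex K, ∃ q ∈ relintSimplex K,
    p ≠ q ∧ r = 2 * breg α p q / (l1 (p - q)) ^ 2}
  have hlow (p) (hp : p ∈ relintSimplex K) (q) (hq : q ∈ relintSimplex K) :
      breg α p q ≥ (2:ℝ) ^ (1 - α) / 2 * l1 (p - q) ^ 2 := by
    rw [sub_eq_add_neg, Real.rpow_add two_pos, Real.rpow_one, mul_div_cancel_left₀ _ two_ne_zero]
    exact two_rpow_neg_mul_l1_sq_le_breg hα hp hq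
  have hbound {C : ℝ} (hC : ∀ p ∈ relintSimplex K, ∀ q ∈ relintSimplex K,
      breg α p q ≥ C / 2 * l1 (p - q) ^ 2) : C ∈ lowerBounds S := by
    rintro r ⟨p, hp, q, hq, hpq, rfl⟩
    exact le_two_mul_breg_div_sq (hC p hp q hq) hpq
  have hclose (η : ℝ) (hη : 0 < η) : ∃ r ∈ S, r < (2:ℝ) ^ (1 - α) + η := by
    obtain ⟨p, hp, q, hq, hpq, hlt⟩ := exists_breg_ratio_lt (hα.trans one_le_two) hK hη
    exact ⟨_, ⟨p, hp, q, hq, hpq, rfl⟩, hlt⟩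
  have hglb : IsGLB S ((2:ℝ) ^ (1 - α)) := ⟨hbound hlow, fun C hC =>
    le_of_forall_pos_lt_add fun η hη =>
      let ⟨r, hr, hlt⟩ := hclose η hη
      (hC hr).trans_lt hlt⟩
  obtain ⟨r, hr, -⟩ := hclose 1 one_pos
  exact ⟨hglb.csInf_eq ⟨r, hr⟩, fun p hp q hq => two_rpow_neg_mul_l1_sq_le_breg hα hp hq,
    ⟨⟨by positivity, hlow⟩, fun C ⟨_, hC⟩ => hglb.2 (hbound hC)⟩⟩
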